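/- Fix b ∈ {1,…,B}. If δ(b,v) ≥ −(r(v+1) − r(v)) for all v ∈ {1,…,V−1}, then the map v ↦ μ(b,v) is non-decreasing on {1,…,V}. -/

import Mathlib

/-! The minimizer `g(x)` of `c(s) − s·x` is monotone in `x` by the usual exchange argument: adding
the two optimality inequalities for `x < x'` gives `(g x' − g x)(x' − x) ≥ 0`. The hypothesis on `δ`
says exactly that the argument `r(v) + σ(b,v−1)` of `g` does not decrease from `v` to `v + 1`. -/

/-- `delta S hS c h r b v` is δ(b,v): δ(b,0) = 0 and
δ(b,v) = h(b) + min_{s ∈ S} (c(s) − s·(r(v) + Σ_{i=0}^{v−1} δ(b,i))). -/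
noncomputable def delta (S : Finset ℝ) (hS : S.Nonempty) (c : ℝ → ℝ) (h r : ℕ → ℝ)
    (b : ℕ) : ℕ → ℝ
  | 0 => 0
  | v + 1 => h b + S.inf' hS (fun s =>
      c s - s * (r (v + 1) + ∑ i ∈ (Finset.range (v + 1)).attach, delta S hS c h r b i.1))
decreasing_by exact Finset.mem_range.mp i.2

/-- `sigma S hS c h r b v` is σ(b,v) = Σ_{i=0}^{v} δ(b,i). -/
noncomputable def sigma (S : Finset ℝ) (hS : S.Nonempty) (c : ℝ → ℝ) (h r : ℕ → ℝ)
    (b v : ℕ) : ℝ :=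
  ∑ i ∈ Finset.range (v + 1), delta S hS c h r b i

open Classical

/-- `gmin S hS c x` = the least element of the set of minimizers over s ∈ S of c(s) − s·x. -/
noncomputable def gmin (S : Finset ℝ) (hS : S.Nonempty) (c : ℝ → ℝ) (x : ℝ) : ℝ :=
  (S.filter (fun s => ∀ s' ∈ S, c s - s * x ≤ c s' - s' * x)).min'
    (by
      obtain ⟨s, hs, hmin⟩ := S.exists_min_image (fun s => c s - s * x) hS
      exact ⟨s, Finset.mem_filter.mpr ⟨hs, fun s' hs' => hmin s' hs'⟩⟩)

/-- μ(b,v) = g(r(v) + σ(b,v−1)). -/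
noncomputable def mu (S : Finset ℝ) (hS : S.Nonempty) (c : ℝ → ℝ) (h r : ℕ → ℝ)
    (b v : ℕ) : ℝ :=
  gmin S hS c (r v + sigma S hS c h r b (v - 1))

section

variable (S : Finset ℝ) (hS : S.Nonempty) (c : ℝ → ℝ)

theorem gmin_mem_minimizers (x : ℝ) :
    gmin S hS c x ∈ S.filter fun s => ∀ s' ∈ S, c s - s * x ≤ c s' - s' * x :=
  Finset.min'_mem _ _

theorem gmin_mem (x : ℝ) : gmin S hS c x ∈ S :=
  (Finset.mem_filter.mp (gmin_mem_minimizers S hS c x)).1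

theorem isMinOn_gmin (x : ℝ) : IsMinOn (fun s => c s - s * x) S (gmin S hS c x) :=
  (Finset.mem_filter.mp (gmin_mem_minimizers S hS c x)).2

theorem gmin_monotone : Monotone (gmin S hS c) := by
  intro x x' hxx'
  set s := gmin S hS c x
  set s' := gmin S hS c x'
  have hx : c s - s * x ≤ c s' - s' * x := isMinOn_gmin S hS c x (gmin_mem S hS c x')
  have hx' : c s' - s' * x' ≤ c s - s * x' := isMinOn_gmin S hS c x' (gmin_mem S hS c x)
  rcases hxx'.eq_or_lt with rfl | hlt
  · exact le_rfl
  by_contra! hgt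
  nlinarith [mul_pos (sub_pos.2 hgt) (sub_pos.2 hlt)]

end

theorem sigma_succ (S : Finset ℝ) (hS : S.Nonempty) (c : ℝ → ℝ) (h r : ℕ → ℝ) (b v : ℕ) :
    sigma S hS c h r b (v + 1) = sigma S hS c h r b v + delta S hS c h r b (v + 1) :=
  Finset.sum_range_succ _ _

theorem mu_monotoneOn_Icc (S : Finset ℝ) (hS : S.Nonempty) (c : ℝ → ℝ) (h r : ℕ → ℝ)
    (b V : ℕ) (hdelta : ∀ v, 1 ≤ v → v + 1 ≤ V → delta S hS c h r b v ≥ -(r (v + 1) - r v)) :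
    MonotoneOn (mu S hS c h r b) (Set.Icc 1 V) := by
  refine monotoneOn_of_le_succ Set.ordConnected_Icc fun v _ hv hv' => ?_
  obtain ⟨w, rfl⟩ := Nat.exists_eq_add_of_le' hv.1
  have hstep : r (w + 1) + sigma S hS c h r b w ≤ r (w + 1 + 1) + sigma S hS c h r b (w + 1) := by
    rw [sigma_succ]
    linarith [hdelta (w + 1) le_add_self hv'.2]
  exact gmin_monotone S hS c hstep

theorem stmt10_general
    (S : Finset ℝ) (hS : S.Nonempty)
    (c : ℝ → ℝ)
    (h : ℕ → ℝ)
    (r : ℕ → ℝ)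
    (V : ℕ)
    (b : ℕ)
    (hdelta : ∀ v, 1 ≤ v → v + 1 ≤ V →
      delta S hS c h r b v ≥ -(r (v + 1) - r v)) :
    ∀ v v', 1 ≤ v → v ≤ v' → v' ≤ V →
      mu S hS c h r b v ≤ mu S hS c h r b v' :=
  fun _ _ h1v hvv' hv'V =>
    mu_monotoneOn_Icc S hS c h r b V hdelta ⟨h1v, hvv'.trans hv'V⟩ ⟨h1v.trans hvv', hv'V⟩ hvv'

/-- Fix b ∈ {1,…,B}. If δ(b,v) ≥ −(r(v+1) − r(v)) for all v ∈ {1,…,V−1},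
then v ↦ μ(b,v) is non-decreasing on {1,…,V}. -/
theorem stmt10
    (S : Finset ℝ) (hS : S.Nonempty) (hS01 : ∀ s ∈ S, s ∈ Set.Icc (0 : ℝ) 1)
    (c : ℝ → ℝ) (hc0 : ∀ s ∈ S, 0 ≤ c s)
    (hcmono : ∀ s ∈ S, ∀ s' ∈ S, s ≤ s' → c s ≤ c s')
    (h : ℕ → ℝ) (hh0 : ∀ b, 0 ≤ h b) (hhmono : Monotone h)
    (r : ℕ → ℝ) (hrmono : Monotone r) (hr0 : r 0 = 0) (hrpos : ∀ v, 1 ≤ v → 0 < r v)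
    (B V : ℕ) (hB : 0 < B) (hV : 0 < V)
    (b : ℕ) (hb1 : 1 ≤ b) (hbB : b ≤ B)
    (hdelta : ∀ v, 1 ≤ v → v + 1 ≤ V →
      delta S hS c h r b v ≥ -(r (v + 1) - r v)) :
    ∀ v v', 1 ≤ v → v ≤ v' → v' ≤ V →
      mu S hS c h r b v ≤ mu S hS c h r b v' :=
  stmt10_general S hS c h r V b hdelta
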